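/- arXiv:1510.06567 — 2 statements merged into one kernel-verified Lean document; each statement's English description precedes it below -/
import Mathlib

section
/- Let P be a nonempty compact convex subset of ℝⁿ, f, g : ℝⁿ → ℝ convex and continuously differentiable, F = f + g. Let (x_k) be a sequence in P converging to a point x̃ ∈ P that is not a minimizer of F over P, and for each k let s_k minimize u ↦ ⟨∇f(x_k), u − x_k⟩ + g(u) − g(x_k) over P. Then limsup_{k→∞} ⟨∇F(x_k), s_k − x_k⟩ ≤ inf_{s ∈ P} [⟨∇f(x̃), s − x̃⟩ + g(s) − g(x̃)] < 0. (The direction sequence is gradient related.) -/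
/-!
The tangent-line inequality for `g` bounds `⟪∇F(x_k), s_k - x_k⟫` by the minimum over `P` of
the partial linearization at `x_k`, hence by its value at any fixed `u ∈ P`; that value depends
continuously on `x_k`, so the limsup is at most its value at `x̃`. At `x̃` itself, convexity of
`f` bounds the partial linearization at a point `y ∈ P` with `F y < F x̃` by `F y - F x̃ < 0`.
-/

open RealInnerProductSpace Filter Topology Set

theorem limsup_le_of_le_of_tendsto {u v : ℕ → ℝ} {a : ℝ} (hu : BddBelow (range u))
    (huv : ∀ k, u k ≤ v k) (hv : Tendsto v atTop (𝓝 a)) : limsup u atTop ≤ a := by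
  obtain ⟨m, hm⟩ := hu
  calc limsup u atTop
      ≤ limsup v atTop := limsup_le_limsup (.of_forall huv)
        (isCoboundedUnder_le_of_le atTop fun k => hm ⟨k, rfl⟩) hv.isBoundedUnder_le
    _ = a := hv.limsup_eq

variable {E : Type*} [NormedAddCommGroup E] [InnerProductSpace ℝ E] [CompleteSpace E]

theorem ContDiff.continuous_gradient {h : E → ℝ} (hh : ContDiff ℝ 1 h) :
    Continuous (gradient h) :=
  (InnerProductSpace.toDual ℝ E).symm.continuous.comp (hh.continuous_fderiv one_ne_zero)

theorem inner_gradient_add_left {f g : E → ℝ} {x : E} (hf : DifferentiableAt ℝ f x)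
    (hg : DifferentiableAt ℝ g x) (v : E) :
    ⟪gradient (fun y => f y + g y) x, v⟫ = ⟪gradient f x, v⟫ + ⟪gradient g x, v⟫ := by
  rw [inner_gradient_left, inner_gradient_left, inner_gradient_left, fderiv_fun_add hf hg]
  rfl

/-- Restricted to the segment `t ↦ x + t • (y - x)`, this is the one-variable fact that a
convex function lies above its tangent line. -/
theorem ConvexOn.inner_gradient_sub_le {h : E → ℝ} {s : Set E} (hc : ConvexOn ℝ s h) {x y : E}
    (hx : x ∈ s) (hy : y ∈ s) (hd : DifferentiableAt ℝ h x) :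
    ⟪gradient h x, y - x⟫ ≤ h y - h x := by
  let ℓ : ℝ →ᵃ[ℝ] E := AffineMap.lineMap x y
  have hderiv : HasDerivAt (h ∘ ℓ) ⟪gradient h x, y - x⟫ 0 := by
    rw [inner_gradient_left]
    have hd' : HasFDerivAt h (fderiv ℝ h x) (ℓ 0) := by
      simpa [ℓ] using hd.hasFDerivAt
    exact hd'.comp_hasDerivAt 0 AffineMap.hasDerivAt_lineMap
  have hslope := (hc.comp_affineMap ℓ).le_slope_of_hasDerivAt
    (by simpa [ℓ] using hx) (by simpa [ℓ] using hy) zero_lt_one hderiv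
  simpa [slope, ℓ] using hslope

theorem IsCompact.bddBelow_range_inner_gradient {ι : Type*} {F : E → ℝ} {P : Set E}
    (hP : IsCompact P) (hF : Continuous (gradient F)) {x s : ι → E} (hx : ∀ k, x k ∈ P)
    (hs : ∀ k, s k ∈ P) : BddBelow (range fun k => ⟪gradient F (x k), s k - x k⟫) := by
  have hψ : Continuous fun p : E × E => ⟪gradient F p.1, p.2 - p.1⟫ :=
    (hF.comp continuous_fst).inner (continuous_snd.sub continuous_fst)
  refine ((hP.prod hP).bddBelow_image hψ.continuousOn).mono ?_
  rintro _ ⟨k, rfl⟩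
  exact ⟨(x k, s k), ⟨hx k, hs k⟩, rfl⟩

noncomputable def partialLinearization (f g : E → ℝ) (x u : E) : ℝ :=
  ⟪gradient f x, u - x⟫ + g u - g x

variable {f g : E → ℝ}

theorem continuous_partialLinearization (hf : Continuous (gradient f)) (hg : Continuous g) :
    Continuous fun p : E × E => partialLinearization f g p.1 p.2 :=
  (((hf.comp continuous_fst).inner (continuous_snd.sub continuous_fst)).add
    (hg.comp continuous_snd)).sub (hg.comp continuous_fst)

theorem partialLinearization_le_sub {s : Set E} (hfc : ConvexOn ℝ s f) {x y : E} (hx : x ∈ s)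
    (hy : y ∈ s) (hfd : DifferentiableAt ℝ f x) :
    partialLinearization f g x y ≤ (f y + g y) - (f x + g x) := by
  have := hfc.inner_gradient_sub_le hx hy hfd
  unfold partialLinearization
  linarith

theorem inner_gradient_add_le_partialLinearization {P t : Set E} (hgc : ConvexOn ℝ t g)
    {x s u : E} (hx : x ∈ t) (hs : s ∈ t) (hfd : DifferentiableAt ℝ f x)
    (hgd : DifferentiableAt ℝ g x) (hmin : IsMinOn (partialLinearization f g x) P s)
    (hu : u ∈ P) :
    ⟪gradient (fun y => f y + g y) x, s - x⟫ ≤ partialLinearization f g x u := by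
  have htangent := hgc.inner_gradient_sub_le hx hs hgd
  have hsu : partialLinearization f g x s ≤ partialLinearization f g x u := hmin hu
  rw [inner_gradient_add_left hfd hgd]
  unfold partialLinearization at hsu ⊢
  linarith

theorem stmt_9_general (n : ℕ) (P : Set (EuclideanSpace ℝ (Fin n)))
    (hPne : P.Nonempty) (hPcpt : IsCompact P)
    (f g : EuclideanSpace ℝ (Fin n) → ℝ)
    (hfconv : ConvexOn ℝ Set.univ f) (hgconv : ConvexOn ℝ Set.univ g)
    (hf : ContDiff ℝ 1 f) (hg : ContDiff ℝ 1 g)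
    (x : ℕ → EuclideanSpace ℝ (Fin n)) (hxP : ∀ k, x k ∈ P)
    (xt : EuclideanSpace ℝ (Fin n))
    (hconv : Filter.Tendsto x Filter.atTop (nhds xt))
    (hnotmin : ¬ IsMinOn (fun y => f y + g y) P xt)
    (s : ℕ → EuclideanSpace ℝ (Fin n)) (hsP : ∀ k, s k ∈ P)
    (hsmin : ∀ k, IsMinOn (fun u => ⟪gradient f (x k), u - x k⟫ + g u - g (x k)) P (s k)) :
    Filter.limsup (fun k => ⟪gradient (fun y => f y + g y) (x k), s k - x k⟫) Filter.atTop ≤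
        (⨅ u : P, ⟪gradient f xt, (u : EuclideanSpace ℝ (Fin n)) - xt⟫ + g u - g xt) ∧
      (⨅ u : P, ⟪gradient f xt, (u : EuclideanSpace ℝ (Fin n)) - xt⟫ + g u - g xt) < 0 := by
  have : Nonempty P := hPne.to_subtype
  have hfd := hf.differentiable one_ne_zero
  have hgd := hg.differentiable one_ne_zero
  have hφ := continuous_partialLinearization hf.continuous_gradient hg.continuous
  have hφ_bdd : BddBelow (range fun u : P => partialLinearization f g xt u) := by
    rw [← image_eq_range]
    exact hPcpt.bddBelow_image (hφ.comp (.prodMk continuous_const continuous_id)).continuousOn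
  have hseq_bdd := hPcpt.bddBelow_range_inner_gradient (hf.add hg).continuous_gradient hxP hsP
  have hlimsup (u : P) : limsup (fun k => ⟪gradient (fun y => f y + g y) (x k), s k - x k⟫)
      atTop ≤ partialLinearization f g xt u :=
    limsup_le_of_le_of_tendsto hseq_bdd
      (fun k => inner_gradient_add_le_partialLinearization hgconv (mem_univ _) (mem_univ _)
        (hfd _) (hgd _) (hsmin k) u.2)
      ((hφ.comp (.prodMk continuous_id continuous_const)).tendsto xt |>.comp hconv)
  obtain ⟨y, hyP, hy⟩ : ∃ y ∈ P, f y + g y < f xt + g xt := by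
    simpa [isMinOn_iff] using hnotmin
  refine ⟨le_ciInf hlimsup, ?_⟩
  calc ⨅ u : P, partialLinearization f g xt u
      ≤ partialLinearization f g xt y := ciInf_le hφ_bdd ⟨y, hyP⟩
    _ ≤ (f y + g y) - (f xt + g xt) :=
      partialLinearization_le_sub hfconv (mem_univ _) (mem_univ _) (hfd _)
    _ < 0 := sub_neg.2 hy

/-- gradient relatedness: if `x_k ∈ P` converges to a non-minimizer `x̃ ∈ P`
of `F = f + g` and each `s_k` minimizes the partially linearized map at `x_k` over `P`, then
`limsup_k ⟪∇F x_k, s_k - x_k⟫ ≤ inf_{s ∈ P} [⟪∇f x̃, s - x̃⟫ + g s - g x̃] < 0`. -/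
theorem stmt_9 (n : ℕ) (P : Set (EuclideanSpace ℝ (Fin n)))
    (hPne : P.Nonempty) (hPcpt : IsCompact P) (hPconv : Convex ℝ P)
    (f g : EuclideanSpace ℝ (Fin n) → ℝ)
    (hfconv : ConvexOn ℝ Set.univ f) (hgconv : ConvexOn ℝ Set.univ g)
    (hf : ContDiff ℝ 1 f) (hg : ContDiff ℝ 1 g)
    (x : ℕ → EuclideanSpace ℝ (Fin n)) (hxP : ∀ k, x k ∈ P)
    (xt : EuclideanSpace ℝ (Fin n)) (hxt : xt ∈ P)
    (hconv : Filter.Tendsto x Filter.atTop (nhds xt))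
    (hnotmin : ¬ IsMinOn (fun y => f y + g y) P xt)
    (s : ℕ → EuclideanSpace ℝ (Fin n)) (hsP : ∀ k, s k ∈ P)
    (hsmin : ∀ k, IsMinOn (fun u => ⟪gradient f (x k), u - x k⟫ + g u - g (x k)) P (s k)) :
    Filter.limsup (fun k => ⟪gradient (fun y => f y + g y) (x k), s k - x k⟫) Filter.atTop ≤
        (⨅ u : P, ⟪gradient f xt, (u : EuclideanSpace ℝ (Fin n)) - xt⟫ + g u - g xt) ∧
      (⨅ u : P, ⟪gradient f xt, (u : EuclideanSpace ℝ (Fin n)) - xt⟫ + g u - g xt) < 0 :=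
  stmt_9_general n P hPne hPcpt f g hfconv hgconv hf hg x hxP xt hconv hnotmin s hsP hsmin
end

section
/- Let P be a nonempty compact convex subset of ℝⁿ, f, g : ℝⁿ → ℝ convex and differentiable, with curvature-type constant C_F ≥ 0 for F = f + g, and x⋆ ∈ P a minimizer of F over P. Fix x_k ∈ P, let s_k minimize u ↦ ⟨∇f(x_k), u − x_k⟩ + g(u) − g(x_k) over P, α ∈ [0,1], x_{k+1} = x_k + α(s_k − x_k), and h(x) = F(x) − F(x⋆). Then h(x_{k+1}) + α[g(s_k) − g(x_k)] ≤ (1 − α) h(x_k) + α⟨∇g(x_k), s_k − x_k⟩ + (C_F/2)α². -/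
/-!
Apply the curvature bound along the segment from `x_k` to `s_k` and split `∇F = ∇f + ∇g`.
Testing the minimality of `s_k` against the competitor `x⋆`, and bounding `f x⋆` from below by
the tangent plane of the convex `f` at `x_k`, shows that the partially linearized step
`⟪∇f x_k, s_k - x_k⟫ + g s_k - g x_k` is at most `F x⋆ - F x_k`.
-/

open RealInnerProductSpace

theorem gradient_fun_add {F : Type*} [NormedAddCommGroup F] [InnerProductSpace ℝ F]
    [CompleteSpace F] {f g : F → ℝ} {x : F} (hf : DifferentiableAt ℝ f x)
    (hg : DifferentiableAt ℝ g x) :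
    gradient (fun z => f z + g z) x = gradient f x + gradient g x := by
  simp only [gradient, fderiv_fun_add hf hg, map_add]

theorem ConvexOn.add_fderiv_sub_le {E : Type*} [NormedAddCommGroup E] [NormedSpace ℝ E]
    {s : Set E} {f : E → ℝ} (hf : ConvexOn ℝ s f) {x y : E} (hx : x ∈ s) (hy : y ∈ s)
    (hfx : DifferentiableAt ℝ f x) :
    f x + fderiv ℝ f x (y - x) ≤ f y := by
  set L : ℝ →ᵃ[ℝ] E := AffineMap.lineMap x y
  have hL0 : L 0 = x := AffineMap.lineMap_apply_zero x y
  have hL1 : L 1 = y := AffineMap.lineMap_apply_one x y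
  have hline : ConvexOn ℝ (L ⁻¹' s) (f ∘ L) := hf.comp_affineMap L
  have hfL0 : HasFDerivAt f (fderiv ℝ f x) (L 0) := hL0 ▸ hfx.hasFDerivAt
  have hderiv : HasDerivAt (f ∘ L) (fderiv ℝ f x (y - x)) 0 :=
    hfL0.comp_hasDerivAt 0 AffineMap.hasDerivAt_lineMap
  have hslope := hline.le_slope_of_hasDerivAt (show (0 : ℝ) ∈ L ⁻¹' s by simpa [hL0] using hx)
    (show (1 : ℝ) ∈ L ⁻¹' s by simpa [hL1] using hy) one_pos hderiv
  simp only [slope, Function.comp_apply, hL0, hL1, sub_zero, inv_one, one_smul,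
    vsub_eq_sub] at hslope
  linarith

theorem ConvexOn.add_inner_gradient_sub_le {F : Type*} [NormedAddCommGroup F]
    [InnerProductSpace ℝ F] [CompleteSpace F] {s : Set F} {f : F → ℝ} (hf : ConvexOn ℝ s f)
    {x y : F} (hx : x ∈ s) (hy : y ∈ s) (hfx : DifferentiableAt ℝ f x) :
    f x + ⟪gradient f x, y - x⟫ ≤ f y := by
  rw [inner_gradient_left]
  exact hf.add_fderiv_sub_le hx hy hfx

theorem stmt_17_general (n : ℕ) (P : Set (EuclideanSpace ℝ (Fin n)))
    (f g : EuclideanSpace ℝ (Fin n) → ℝ)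
    (hfconv : ConvexOn ℝ Set.univ f)
    (hfdiff : Differentiable ℝ f) (hgdiff : Differentiable ℝ g)
    (CF : ℝ)
    (hcurv : ∀ x ∈ P, ∀ y ∈ P, ∀ α ∈ Set.Icc (0 : ℝ) 1,
      f ((1 - α) • x + α • y) + g ((1 - α) • x + α • y) ≤
        f x + g x + α * ⟪gradient (fun z => f z + g z) x, y - x⟫ + CF / 2 * α ^ 2)
    (xstar : EuclideanSpace ℝ (Fin n)) (hxstar : xstar ∈ P)
    (xk : EuclideanSpace ℝ (Fin n)) (hxk : xk ∈ P)
    (sk : EuclideanSpace ℝ (Fin n)) (hsk : sk ∈ P)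
    (hskmin : IsMinOn (fun u => ⟪gradient f xk, u - xk⟫ + g u - g xk) P sk)
    (α : ℝ) (hα : α ∈ Set.Icc (0 : ℝ) 1) :
    ((f (xk + α • (sk - xk)) + g (xk + α • (sk - xk))) - (f xstar + g xstar))
        + α * (g sk - g xk) ≤
      (1 - α) * ((f xk + g xk) - (f xstar + g xstar))
        + α * ⟪gradient g xk, sk - xk⟫ + CF / 2 * α ^ 2 := by
  have hstep : xk + α • (sk - xk) = (1 - α) • xk + α • sk := by
    rw [sub_smul, smul_sub, one_smul]; abel
  have hdescent := hcurv xk hxk sk hsk α hα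
  rw [← hstep, gradient_fun_add (hfdiff xk) (hgdiff xk), inner_add_left] at hdescent
  have hlinearized : ⟪gradient f xk, sk - xk⟫ + g sk - g xk ≤
      (f xstar + g xstar) - (f xk + g xk) := by
    have htangent := hfconv.add_inner_gradient_sub_le (Set.mem_univ xk)
      (Set.mem_univ xstar) (hfdiff xk)
    have hsk_le : _ ≤ ⟪gradient f xk, xstar - xk⟫ + g xstar - g xk := hskmin hxstar
    linarith
  have hscaled := mul_le_mul_of_nonneg_left hlinearized hα.1
  linarith

/-- intermediate inequality of the rate proof: with `h x = F x - F x⋆`,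
`s_k` minimizing the partially linearized map at `x_k ∈ P` over `P`, `α ∈ [0,1]`, and
`x_{k+1} = x_k + α (s_k - x_k)`:
`h x_{k+1} + α (g s_k - g x_k) ≤ (1 - α) h x_k + α ⟪∇g x_k, s_k - x_k⟫ + (C_F/2) α²`. -/
theorem stmt_17 (n : ℕ) (P : Set (EuclideanSpace ℝ (Fin n)))
    (hPne : P.Nonempty) (hPcpt : IsCompact P) (hPconv : Convex ℝ P)
    (f g : EuclideanSpace ℝ (Fin n) → ℝ)
    (hfconv : ConvexOn ℝ Set.univ f) (hgconv : ConvexOn ℝ Set.univ g)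
    (hfdiff : Differentiable ℝ f) (hgdiff : Differentiable ℝ g)
    (CF : ℝ) (hCF : 0 ≤ CF)
    (hcurv : ∀ x ∈ P, ∀ y ∈ P, ∀ α ∈ Set.Icc (0 : ℝ) 1,
      f ((1 - α) • x + α • y) + g ((1 - α) • x + α • y) ≤
        f x + g x + α * ⟪gradient (fun z => f z + g z) x, y - x⟫ + CF / 2 * α ^ 2)
    (xstar : EuclideanSpace ℝ (Fin n)) (hxstar : xstar ∈ P)
    (hmin : IsMinOn (fun x => f x + g x) P xstar)
    (xk : EuclideanSpace ℝ (Fin n)) (hxk : xk ∈ P)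
    (sk : EuclideanSpace ℝ (Fin n)) (hsk : sk ∈ P)
    (hskmin : IsMinOn (fun u => ⟪gradient f xk, u - xk⟫ + g u - g xk) P sk)
    (α : ℝ) (hα : α ∈ Set.Icc (0 : ℝ) 1) :
    ((f (xk + α • (sk - xk)) + g (xk + α • (sk - xk))) - (f xstar + g xstar))
        + α * (g sk - g xk) ≤
      (1 - α) * ((f xk + g xk) - (f xstar + g xstar))
        + α * ⟪gradient g xk, sk - xk⟫ + CF / 2 * α ^ 2 :=
  stmt_17_general n P f g hfconv hfdiff hgdiff CF hcurv xstar hxstar xk hxk sk hsk hskmin α hα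
end
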